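/- Let T ⊆ {AX, AG} be nonempty and φ a satisfiable flat CTL formula (temporal depth ≤ 1) over the standard Boolean base using only the operators in T and their duals. Then φ has a serial model of extent at most |T| and of size O(|φ|). -/

import Mathlib

def Serial {W : Type} (R : W → W → Prop) : Prop := ∀ w, ∃ u, R w u

def IsPath {W : Type} (R : W → W → Prop) (π : ℕ → W) : Prop := ∀ i, R (π i) (π (i+1))

structure Kripke (W : Type) where
  R : W → W → Prop
  V : ℕ → W → Prop

inductive CTL where
  | atom : ℕ → CTL
  | neg  : CTL → CTL
  | and  : CTL → CTL → CTL
  | or   : CTL → CTL → CTL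
  | AX : CTL → CTL
  | EX : CTL → CTL
  | AF : CTL → CTL
  | EF : CTL → CTL
  | AG : CTL → CTL
  | EG : CTL → CTL
  | AU : CTL → CTL → CTL
  | EU : CTL → CTL → CTL
  | AR : CTL → CTL → CTL
  | ER : CTL → CTL → CTL
deriving DecidableEq

def sat {W : Type} (K : Kripke W) : CTL → W → Prop
  | .atom p, w => K.V p w
  | .neg φ, w => ¬ sat K φ w
  | .and φ ψ, w => sat K φ w ∧ sat K ψ w
  | .or φ ψ, w => sat K φ w ∨ sat K ψ w
  | .AX φ, w => ∀ π : ℕ → W, IsPath K.R π → π 0 = w → sat K φ (π 1)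
  | .EX φ, w => ∃ π : ℕ → W, IsPath K.R π ∧ π 0 = w ∧ sat K φ (π 1)
  | .AF φ, w => ∀ π : ℕ → W, IsPath K.R π → π 0 = w → ∃ i, sat K φ (π i)
  | .EF φ, w => ∃ π : ℕ → W, IsPath K.R π ∧ π 0 = w ∧ ∃ i, sat K φ (π i)
  | .AG φ, w => ∀ π : ℕ → W, IsPath K.R π → π 0 = w → ∀ i, sat K φ (π i)
  | .EG φ, w => ∃ π : ℕ → W, IsPath K.R π ∧ π 0 = w ∧ ∀ i, sat K φ (π i)
  | .AU φ ψ, w => ∀ π : ℕ → W, IsPath K.R π → π 0 = w →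
      ∃ i, sat K ψ (π i) ∧ ∀ j, j < i → sat K φ (π j)
  | .EU φ ψ, w => ∃ π : ℕ → W, IsPath K.R π ∧ π 0 = w ∧
      ∃ i, sat K ψ (π i) ∧ ∀ j, j < i → sat K φ (π j)
  | .AR φ ψ, w => ∀ π : ℕ → W, IsPath K.R π → π 0 = w →
      ∀ i, sat K ψ (π i) ∨ ∃ j, j < i ∧ sat K φ (π j)
  | .ER φ ψ, w => ∃ π : ℕ → W, IsPath K.R π ∧ π 0 = w ∧
      ∀ i, sat K ψ (π i) ∨ ∃ j, j < i ∧ sat K φ (π j)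

def CTL.len : CTL → ℕ
  | .atom _ => 1
  | .neg φ => φ.len + 1
  | .and φ ψ => φ.len + ψ.len + 1
  | .or φ ψ => φ.len + ψ.len + 1
  | .AX φ => φ.len + 1
  | .EX φ => φ.len + 1
  | .AF φ => φ.len + 1
  | .EF φ => φ.len + 1
  | .AG φ => φ.len + 1
  | .EG φ => φ.len + 1
  | .AU φ ψ => φ.len + ψ.len + 1
  | .EU φ ψ => φ.len + ψ.len + 1
  | .AR φ ψ => φ.len + ψ.len + 1
  | .ER φ ψ => φ.len + ψ.len + 1

def CTL.td : CTL → ℕ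
  | .atom _ => 0
  | .neg φ => φ.td
  | .and φ ψ => max φ.td ψ.td
  | .or φ ψ => max φ.td ψ.td
  | .AX φ => φ.td + 1
  | .EX φ => φ.td + 1
  | .AF φ => φ.td + 1
  | .EF φ => φ.td + 1
  | .AG φ => φ.td + 1
  | .EG φ => φ.td + 1
  | .AU φ ψ => max φ.td ψ.td + 1
  | .EU φ ψ => max φ.td ψ.td + 1
  | .AR φ ψ => max φ.td ψ.td + 1
  | .ER φ ψ => max φ.td ψ.td + 1

/-- The formula uses only the temporal operators allowed by the flags:
`AX`/`EX` if `ax`, `AG`/`EF` if `ag`. -/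
def AllowOps (ax ag : Bool) : CTL → Prop
  | .atom _ => True
  | .neg φ => AllowOps ax ag φ
  | .and φ ψ => AllowOps ax ag φ ∧ AllowOps ax ag ψ
  | .or φ ψ => AllowOps ax ag φ ∧ AllowOps ax ag ψ
  | .AX φ => ax = true ∧ AllowOps ax ag φ
  | .EX φ => ax = true ∧ AllowOps ax ag φ
  | .AG φ => ag = true ∧ AllowOps ax ag φ
  | .EF φ => ag = true ∧ AllowOps ax ag φ
  | _ => False

/-!
The truth of a flat formula at `w₀` depends only on the valuation at `w₀` and on which
propositional formulas hold at some successor, or at some reachable world, of `w₀`. So pick, for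
every argument `ψ` of a modality of `φ` and for `¬ψ`, a successor and a reachable world satisfying
it whenever one exists. Copies of these worlds, arranged as a root, a layer of looping successors
(present for `AX`) and a layer of looping reachable worlds (present for `AG`), form a model of size
`O(|φ|)` agreeing with the original one on `φ`, in which a path climbs at most one layer per
operator in `T`.
-/

def CTL.subs : CTL → List CTL
  | .atom p => [.atom p]
  | .neg φ => .neg φ :: φ.subs
  | .and φ ψ => .and φ ψ :: (φ.subs ++ ψ.subs)
  | .or φ ψ => .or φ ψ :: (φ.subs ++ ψ.subs)
  | .AX φ => .AX φ :: φ.subs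
  | .EX φ => .EX φ :: φ.subs
  | .AF φ => .AF φ :: φ.subs
  | .EF φ => .EF φ :: φ.subs
  | .AG φ => .AG φ :: φ.subs
  | .EG φ => .EG φ :: φ.subs
  | .AU φ ψ => .AU φ ψ :: (φ.subs ++ ψ.subs)
  | .EU φ ψ => .EU φ ψ :: (φ.subs ++ ψ.subs)
  | .AR φ ψ => .AR φ ψ :: (φ.subs ++ ψ.subs)
  | .ER φ ψ => .ER φ ψ :: (φ.subs ++ ψ.subs)

lemma CTL.mem_subs_self (φ : CTL) : φ ∈ φ.subs := by
  cases φ <;> simp [CTL.subs]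

lemma CTL.length_subs_le_len (φ : CTL) : φ.subs.length ≤ φ.len := by
  induction φ <;> simp_all [CTL.subs, CTL.len] <;> omega

lemma CTL.len_pos (φ : CTL) : 0 < φ.len := by
  cases φ <;> simp [CTL.len]

section Paths

variable {W : Type} {R : W → W → Prop}

noncomputable def Serial.path (hR : Serial R) (w : W) : ℕ → W
  | 0 => w
  | n + 1 => (hR (hR.path w n)).choose

lemma Serial.isPath_path (hR : Serial R) (w : W) : IsPath R (hR.path w) :=
  fun n => (hR (hR.path w n)).choose_spec

lemma IsPath.cons {π : ℕ → W} (hπ : IsPath R π) {w : W} (hw : R w (π 0)) :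
    IsPath R (fun | 0 => w | n + 1 => π n) := by
  rintro (_ | n)
  exacts [hw, hπ n]

lemma IsPath.reflTransGen {π : ℕ → W} (hπ : IsPath R π) :
    ∀ i, Relation.ReflTransGen R (π 0) (π i)
  | 0 => .refl
  | i + 1 => (hπ.reflTransGen i).tail (hπ i)

lemma Serial.exists_path_of_rel (hR : Serial R) {w v : W} (h : R w v) :
    ∃ π, IsPath R π ∧ π 0 = w ∧ π 1 = v :=
  ⟨_, (hR.isPath_path v).cons h, rfl, rfl⟩

lemma Serial.exists_path_of_reflTransGen (hR : Serial R) {w v : W}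
    (h : Relation.ReflTransGen R w v) : ∃ π, IsPath R π ∧ π 0 = w ∧ ∃ i, π i = v := by
  induction h using Relation.ReflTransGen.head_induction_on with
  | refl => exact ⟨hR.path v, hR.isPath_path v, rfl, 0, rfl⟩
  | head hwu _ ih =>
    obtain ⟨π, hπ, rfl, i, hi⟩ := ih
    exact ⟨_, hπ.cons hwu, rfl, i + 1, hi⟩

lemma IsPath.ncard_range_le {π : ℕ → W} (hπ : IsPath R π)
    (f : W → ℕ) {N : ℕ} (hf : ∀ x, f x < N) (hR : ∀ x y, R x y → y = x ∨ f x < f y) :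
    (Set.range π).ncard ≤ N := by
  have hmono : Monotone (f ∘ π) := monotone_nat_of_le_succ fun i => by
    rcases hR _ _ (hπ i) with h | h
    · simp [h]
    · exact h.le
  have hconst : ∀ i j, i ≤ j → f (π j) = f (π i) → π j = π i := by
    intro i j hij
    induction j, hij using Nat.le_induction with
    | base => exact fun _ => rfl
    | succ j hij ih =>
      intro hj
      have hji : f (π j) = f (π i) :=
        le_antisymm (hj ▸ hmono j.le_succ) (hmono hij)
      rcases hR _ _ (hπ j) with h | h
      · rw [h, ih hji]
      · omega
  have hinj : Set.InjOn f (Set.range π) := by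
    rintro _ ⟨i, rfl⟩ _ ⟨j, rfl⟩ h
    rcases le_total i j with hij | hij
    exacts [(hconst i j hij h.symm).symm, hconst j i hij h]
  calc (Set.range π).ncard ≤ (↑(Finset.range N) : Set ℕ).ncard :=
        Set.ncard_le_ncard_of_injOn f (by simpa using fun i => hf (π i)) hinj
          (Finset.finite_toSet _)
    _ = N := by rw [Set.ncard_coe_finset, Finset.card_range]

end Paths

section Semantics

variable {W : Type} (K : Kripke W)

lemma sat_EX_iff (hK : Serial K.R) (ψ : CTL) (w : W) :
    sat K (.EX ψ) w ↔ ∃ v, K.R w v ∧ sat K ψ v := by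
  refine ⟨fun ⟨π, hπ, h0, h1⟩ => ⟨π 1, h0 ▸ hπ 0, h1⟩, fun ⟨v, hv, h⟩ => ?_⟩
  obtain ⟨π, hπ, h0, h1⟩ := hK.exists_path_of_rel hv
  exact ⟨π, hπ, h0, h1 ▸ h⟩

lemma sat_EF_iff (hK : Serial K.R) (ψ : CTL) (w : W) :
    sat K (.EF ψ) w ↔ ∃ v, Relation.ReflTransGen K.R w v ∧ sat K ψ v := by
  refine ⟨fun ⟨π, hπ, h0, i, hi⟩ => ⟨π i, h0 ▸ hπ.reflTransGen i, hi⟩, fun ⟨v, hv, h⟩ => ?_⟩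
  obtain ⟨π, hπ, h0, i, hi⟩ := hK.exists_path_of_reflTransGen hv
  exact ⟨π, hπ, h0, i, hi ▸ h⟩

lemma sat_AX_iff_not_EX_neg (ψ : CTL) (w : W) : sat K (.AX ψ) w ↔ ¬ sat K (.EX ψ.neg) w := by
  simp [sat]

lemma sat_AG_iff_not_EF_neg (ψ : CTL) (w : W) : sat K (.AG ψ) w ↔ ¬ sat K (.EF ψ.neg) w := by
  simp [sat]

lemma sat_iff_of_td_eq_zero {W' : Type} {K' : Kripke W'} {w : W} {w' : W'}
    (hV : ∀ p, K.V p w ↔ K'.V p w') {ψ : CTL} (hψ : ψ.td = 0) : sat K ψ w ↔ sat K' ψ w' := by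
  induction ψ with
  | atom p => exact hV p
  | neg ψ ih => exact not_congr (ih hψ)
  | and ψ χ ih₁ ih₂ =>
    rw [CTL.td, Nat.max_eq_zero_iff] at hψ
    exact and_congr (ih₁ hψ.1) (ih₂ hψ.2)
  | or ψ χ ih₁ ih₂ =>
    rw [CTL.td, Nat.max_eq_zero_iff] at hψ
    exact or_congr (ih₁ hψ.1) (ih₂ hψ.2)
  | _ => simp [CTL.td] at hψ

end Semantics

section Layered

variable {S U : Type}

def layeredR (ax ag : Bool) : Option (S ⊕ U) → Option (S ⊕ U) → Prop
  | none, none => ax = false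
  | none, some (.inl _) => ax = true
  | none, some (.inr _) => ax = false ∧ ag = true
  | some (.inl i), some (.inl i') => i = i'
  | some (.inl _), some (.inr _) => ag = true
  | some (.inr j), some (.inr j') => j = j'
  | _, _ => False

def layeredRank (ax ag : Bool) : Option (S ⊕ U) → ℕ
  | none => 0
  | some (.inl _) => cond ax 1 0
  | some (.inr _) => cond ax 1 0 + cond ag 1 0

lemma layeredRank_lt (ax ag : Bool) (x : Option (S ⊕ U)) :
    layeredRank ax ag x < cond ax 1 0 + cond ag 1 0 + 1 := by
  rcases x with _ | _ | _ <;> simp only [layeredRank] <;> omega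

lemma eq_or_layeredRank_lt_of_layeredR {ax ag : Bool} {x y : Option (S ⊕ U)}
    (h : layeredR ax ag x y) : y = x ∨ layeredRank ax ag x < layeredRank ax ag y := by
  rcases x with _ | i | j <;> rcases y with _ | i' | j' <;>
    simp_all [layeredR, layeredRank]

lemma serial_layeredR [Nonempty S] (ax ag : Bool) : Serial (layeredR (S := S) (U := U) ax ag) := by
  rintro (_ | i | j)
  · cases ax
    exacts [⟨none, rfl⟩, ⟨some (.inl (Classical.arbitrary S)), rfl⟩]
  · exact ⟨some (.inl i), rfl⟩
  · exact ⟨some (.inr j), rfl⟩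

lemma layeredR_true_none_iff {ag : Bool} {y : Option (S ⊕ U)} :
    layeredR true ag none y ↔ ∃ i, y = some (.inl i) := by
  rcases y with _ | i | j <;> simp [layeredR]

lemma reflTransGen_layeredR_none_inr [Nonempty S] (ax : Bool) (j : U) :
    Relation.ReflTransGen (layeredR (S := S) ax true) none (some (.inr j)) := by
  cases ax
  · exact .single ⟨rfl, rfl⟩
  · exact .head (b := some (.inl (Classical.arbitrary S))) (by simp [layeredR])
      (.single (by simp [layeredR]))

end Layered

section TruthLemma

variable {W S U : Type} (K : Kripke W) (w₀ : W) (s : S → W) (u : U → W) (ax ag : Bool)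

def Kripke.layered : Kripke (Option (S ⊕ U)) where
  R := layeredR ax ag
  V p x := K.V p (x.elim w₀ (Sum.elim s u))

variable {K w₀ s u ax ag}

lemma sat_layered_iff_of_td_eq_zero {ψ : CTL} (hψ : ψ.td = 0) (x : Option (S ⊕ U)) :
    sat (K.layered w₀ s u ax ag) ψ x ↔ sat K ψ (x.elim w₀ (Sum.elim s u)) :=
  sat_iff_of_td_eq_zero (K.layered w₀ s u ax ag) (K' := K) (fun _ => Iff.rfl) hψ

lemma reflTransGen_layered_elim (hs : ∀ i, K.R w₀ (s i))
    (hu : ∀ j, Relation.ReflTransGen K.R w₀ (u j)) (x : Option (S ⊕ U)) :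
    Relation.ReflTransGen K.R w₀ (x.elim w₀ (Sum.elim s u)) := by
  rcases x with _ | i | j
  exacts [.refl, .single (hs i), hu j]

variable [Nonempty S]

lemma sat_layered_EX_iff (hK : Serial K.R) (hs : ∀ i, K.R w₀ (s i)) (hax : ax = true)
    {ψ : CTL} (hψ : ψ.td = 0)
    (hwit : (∃ v, K.R w₀ v ∧ sat K ψ v) → ∃ i, sat K ψ (s i)) :
    sat (K.layered w₀ s u ax ag) (.EX ψ) none ↔ sat K (.EX ψ) w₀ := by
  subst hax
  rw [sat_EX_iff _ (serial_layeredR _ _), sat_EX_iff _ hK]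
  constructor
  · rintro ⟨y, hy, h⟩
    obtain ⟨i, rfl⟩ := layeredR_true_none_iff.mp hy
    exact ⟨s i, hs i, (sat_layered_iff_of_td_eq_zero hψ _).mp h⟩
  · intro h
    obtain ⟨i, hi⟩ := hwit h
    exact ⟨some (.inl i), rfl, (sat_layered_iff_of_td_eq_zero hψ _).mpr hi⟩

lemma sat_layered_EF_iff (hK : Serial K.R) (hs : ∀ i, K.R w₀ (s i))
    (hu : ∀ j, Relation.ReflTransGen K.R w₀ (u j)) (hag : ag = true) {ψ : CTL} (hψ : ψ.td = 0)
    (hwit : (∃ v, Relation.ReflTransGen K.R w₀ v ∧ sat K ψ v) → ∃ j, sat K ψ (u j)) :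
    sat (K.layered w₀ s u ax ag) (.EF ψ) none ↔ sat K (.EF ψ) w₀ := by
  subst hag
  rw [sat_EF_iff _ (serial_layeredR _ _), sat_EF_iff _ hK]
  constructor
  · rintro ⟨x, -, h⟩
    exact ⟨_, reflTransGen_layered_elim hs hu x, (sat_layered_iff_of_td_eq_zero hψ x).mp h⟩
  · intro h
    obtain ⟨j, hj⟩ := hwit h
    exact ⟨some (.inr j), reflTransGen_layeredR_none_inr ax j,
      (sat_layered_iff_of_td_eq_zero hψ _).mpr hj⟩

lemma sat_layered_none_iff (hK : Serial K.R) (hs : ∀ i, K.R w₀ (s i))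
    (hu : ∀ j, Relation.ReflTransGen K.R w₀ (u j)) {A : Set CTL}
    (hsA : ∀ ψ ∈ A, (∃ v, K.R w₀ v ∧ sat K ψ v) → ∃ i, sat K ψ (s i))
    (huA : ∀ ψ ∈ A, (∃ v, Relation.ReflTransGen K.R w₀ v ∧ sat K ψ v) → ∃ j, sat K ψ (u j))
    {χ : CTL} (hχA : ∀ ψ ∈ χ.subs, ψ ∈ A ∧ ψ.neg ∈ A) (hχ : AllowOps ax ag χ)
    (hχtd : χ.td ≤ 1) :
    sat (K.layered w₀ s u ax ag) χ none ↔ sat K χ w₀ := by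
  induction χ with
  | atom p => exact Iff.rfl
  | neg ψ ih => exact not_congr (ih (fun θ h => hχA θ (by simp [CTL.subs, h])) hχ hχtd)
  | and ψ θ ih₁ ih₂ =>
    rw [CTL.td, max_le_iff] at hχtd
    exact and_congr (ih₁ (fun θ' h => hχA θ' (by simp [CTL.subs, h])) hχ.1 hχtd.1)
      (ih₂ (fun θ' h => hχA θ' (by simp [CTL.subs, h])) hχ.2 hχtd.2)
  | or ψ θ ih₁ ih₂ =>
    rw [CTL.td, max_le_iff] at hχtd
    exact or_congr (ih₁ (fun θ' h => hχA θ' (by simp [CTL.subs, h])) hχ.1 hχtd.1)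
      (ih₂ (fun θ' h => hχA θ' (by simp [CTL.subs, h])) hχ.2 hχtd.2)
  | EX ψ =>
    have hψ : ψ.td = 0 := by simpa [CTL.td] using hχtd
    have hψA := hχA ψ (by simp [CTL.subs, CTL.mem_subs_self])
    exact sat_layered_EX_iff hK hs hχ.1 hψ (hsA ψ hψA.1)
  | AX ψ =>
    have hψ : ψ.td = 0 := by simpa [CTL.td] using hχtd
    have hψA := hχA ψ (by simp [CTL.subs, CTL.mem_subs_self])
    rw [sat_AX_iff_not_EX_neg, sat_AX_iff_not_EX_neg,
      sat_layered_EX_iff hK hs hχ.1 (ψ := ψ.neg) hψ (hsA ψ.neg hψA.2)]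
  | EF ψ =>
    have hψ : ψ.td = 0 := by simpa [CTL.td] using hχtd
    have hψA := hχA ψ (by simp [CTL.subs, CTL.mem_subs_self])
    exact sat_layered_EF_iff hK hs hu hχ.1 hψ (huA ψ hψA.1)
  | AG ψ =>
    have hψ : ψ.td = 0 := by simpa [CTL.td] using hχtd
    have hψA := hχA ψ (by simp [CTL.subs, CTL.mem_subs_self])
    rw [sat_AG_iff_not_EF_neg, sat_AG_iff_not_EF_neg,
      sat_layered_EF_iff hK hs hu hχ.1 (ψ := ψ.neg) hψ (huA ψ.neg hψA.2)]
  | _ => exact hχ.elim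

end TruthLemma

lemma exists_witnesses {α W : Type} {P : W → Prop} (hP : ∃ d, P d) (q : α → W → Prop)
    (A : Finset α) :
    ∃ f : A → W, (∀ i, P (f i)) ∧ ∀ a ∈ A, (∃ v, P v ∧ q a v) → ∃ i, q a (f i) := by
  have hchoice : ∀ a : A, ∃ x, P x ∧ ((∃ v, P v ∧ q a v) → q a x) := fun a => by
    by_cases h : ∃ v, P v ∧ q a v
    · obtain ⟨v, hv, hq⟩ := h
      exact ⟨v, hv, fun _ => hq⟩
    · obtain ⟨d, hd⟩ := hP
      exact ⟨d, hd, fun h' => absurd h' h⟩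
  choose f hf using hchoice
  exact ⟨f, fun i => (hf i).1, fun a ha h => ⟨⟨a, ha⟩, (hf ⟨a, ha⟩).2 h⟩⟩

/-- Let `T ⊆ {AX, AG}` be nonempty (described by the flags `ax`, `ag`) and `φ` a
satisfiable flat CTL formula (temporal depth ≤ 1) over the standard Boolean base using
only the operators in `T` and their duals.  Then `φ` has a serial model of extent at
most `|T|` (every path visits at most `|T| + 1` distinct worlds) and of size `O(|φ|)`. -/
theorem flat_AXAG_small_models :
    ∃ C : ℕ, 0 < C ∧ ∀ (ax ag : Bool), (ax = true ∨ ag = true) →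
      ∀ φ : CTL, AllowOps ax ag φ → φ.td ≤ 1 →
      (∃ (W : Type) (K : Kripke W) (w : W), Serial K.R ∧ sat K φ w) →
      ∃ (W : Type) (inst : Fintype W) (K : Kripke W) (w : W),
        Serial K.R ∧ sat K φ w ∧
        @Fintype.card W inst ≤ C * φ.len ∧
        (∀ π : ℕ → W, IsPath K.R π →
          (Set.range π).ncard ≤ ((cond ax 1 0) + (cond ag 1 0)) + 1) := by
  refine ⟨5, by norm_num, fun ax ag _ φ hφ hφtd ⟨W, K, w₀, hK, hφw₀⟩ => ?_⟩
  set A : Finset CTL := (φ.subs ++ φ.subs.map CTL.neg).toFinset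
  have hφA : ∀ ψ ∈ φ.subs, ψ ∈ (A : Set CTL) ∧ ψ.neg ∈ (A : Set CTL) := fun ψ h => by
    simp [A, h]
  have : Nonempty A := ⟨⟨φ, (hφA φ φ.mem_subs_self).1⟩⟩
  obtain ⟨s, hs, hsA⟩ := exists_witnesses (hK w₀) (sat K) A
  obtain ⟨u, hu, huA⟩ := exists_witnesses ⟨w₀, Relation.ReflTransGen.refl⟩ (sat K) A
  refine ⟨Option (A ⊕ A), inferInstance, K.layered w₀ s u ax ag, none, serial_layeredR ax ag,
    (sat_layered_none_iff hK hs hu hsA huA hφA hφ hφtd).mpr hφw₀, ?_,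
    fun π hπ => hπ.ncard_range_le _ (layeredRank_lt ax ag)
      fun _ _ => eq_or_layeredRank_lt_of_layeredR⟩
  have hA : A.card ≤ 2 * φ.subs.length :=
    (List.toFinset_card_le _).trans (by simp [two_mul])
  simp only [Fintype.card_option, Fintype.card_sum, Fintype.card_coe]
  have := φ.length_subs_le_len
  have := φ.len_pos
  omega
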